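/- arXiv:1609.03992 — 2 statements merged into one kernel-verified Lean document; each statement's English description precedes it below -/
import Mathlib

section
/- For every nonempty list A = [a_1,...,a_r] of integers with all a_i ≥ 2, the adjoint chain A* satisfies d(A*) = d(A), where A* = [(2)_{a_r−1}] * [(2)_{a_{r-1}−1}] * ... * [(2)_{a_1−1}]. -/
/-!
Write a nonempty chain as `S ++ [m]`. Appending an entry acts linearly on the pair
`(disc (S ++ [m]), disc S)`; in particular `disc (S ++ [m])` is affine in `m` with slope `disc S`, and
appending `k` twos acts by a matrix linear in `k`. Gluing `R` with `[(2)_{a-1}]` raises the last entry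
of `R` by one and appends `a - 2` twos, so it sends `(disc R, disc R.dropLast)` to
`((a - 1) disc R + disc R.dropLast, (a - 2) disc R + disc R.dropLast)`. By induction on `A`, the pair of
`A*` is `(disc A, disc A - disc A.tail)`: in these coordinates the gluing step is exactly the recurrence
`disc (a :: A) = a disc A - disc A.tail`.
-/

/-- The discriminant of a chain. -/
def disc : List ℤ → ℤ
  | [] => 1
  | [a] => a
  | a :: b :: l => a * disc (b :: l) - disc l

/-- The chain-gluing operation `*`. -/
def chainGlue (A B : List ℤ) : List ℤ :=
  A.dropLast ++ (A.getLastD 0 + B.headD 0 - 1) :: B.tail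

/-- The chain `[(2)_{a-1}]` of `a - 1` copies of `2`. -/
def twoChain (a : ℤ) : List ℤ := List.replicate (a - 1).toNat 2

/-- The adjoint chain `A* = [(2)_{a_r−1}] * [(2)_{a_{r-1}−1}] * ⋯ * [(2)_{a_1−1}]`. -/
def adjoint : List ℤ → List ℤ
  | [] => []
  | [a] => twoChain a
  | a :: b :: l => chainGlue (adjoint (b :: l)) (twoChain a)

theorem disc_append_pair : ∀ (L : List ℤ) (x y : ℤ),
    disc (L ++ [x, y]) = y * disc (L ++ [x]) - disc L
  | [], x, y => by simp only [List.nil_append, disc]; ring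
  | [a], x, y => by simp only [List.cons_append, List.nil_append, disc]; ring
  | a :: b :: L, x, y => by
    simp only [List.cons_append, disc]
    simp only [← List.cons_append, disc_append_pair (b :: L), disc_append_pair L]
    ring

theorem disc_append_singleton_add_one (S : List ℤ) (m : ℤ) :
    disc (S ++ [m + 1]) = disc (S ++ [m]) + disc S := by
  rcases S.eq_nil_or_concat' with rfl | ⟨T, s, rfl⟩
  · simp [disc]
  · simp only [List.append_assoc, List.cons_append, List.nil_append, disc_append_pair]
    ring

theorem disc_append_cons_replicate_two (S : List ℤ) (m : ℤ) (k : ℕ) :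
    disc (S ++ m :: List.replicate k 2) = (k + 1) * disc (S ++ [m]) - k * disc S := by
  induction k generalizing S m with
  | zero => simp
  | succ k ih =>
    have hsplit : S ++ m :: List.replicate (k + 1) 2 = (S ++ [m]) ++ 2 :: List.replicate k 2 := by
      simp [List.replicate_succ]
    rw [hsplit, ih, List.append_assoc, List.singleton_append, disc_append_pair]
    push_cast
    ring

theorem disc_dropLast_append_cons_replicate_two (S : List ℤ) (m : ℤ) (k : ℕ) :
    disc (S ++ m :: List.replicate k 2).dropLast = k * disc (S ++ [m]) - (k - 1) * disc S := by
  cases k with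
  | zero => simp
  | succ k =>
    have hdrop : (S ++ m :: List.replicate (k + 1) 2).dropLast = S ++ m :: List.replicate k 2 := by
      rw [List.replicate_succ', ← List.cons_append, ← List.append_assoc, List.dropLast_concat]
    rw [hdrop, disc_append_cons_replicate_two]
    push_cast
    ring

theorem chainGlue_ne_nil (A B : List ℤ) : chainGlue A B ≠ [] := by
  simp [chainGlue]

theorem chainGlue_twoChain {a : ℤ} (ha : 2 ≤ a) (S : List ℤ) (m : ℤ) :
    chainGlue (S ++ [m]) (twoChain a) = S ++ (m + 1) :: List.replicate (a - 2).toNat 2 := by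
  have hlen : (a - 1).toNat = (a - 2).toNat + 1 := by omega
  simp only [chainGlue, twoChain, hlen, List.replicate_succ, List.dropLast_concat,
    List.getLastD_concat, List.headD_cons, List.tail_cons]
  ring_nf

section Glue

variable {a : ℤ} (ha : 2 ≤ a) {R : List ℤ} (hR : R ≠ [])
include ha hR

theorem disc_chainGlue_twoChain :
    disc (chainGlue R (twoChain a)) = (a - 1) * disc R + disc R.dropLast := by
  obtain ⟨S, m, rfl⟩ := (List.eq_nil_or_concat' R).resolve_left hR
  rw [chainGlue_twoChain ha, disc_append_cons_replicate_two, disc_append_singleton_add_one,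
    Int.toNat_of_nonneg (by omega), List.dropLast_concat]
  ring

theorem disc_dropLast_chainGlue_twoChain :
    disc (chainGlue R (twoChain a)).dropLast = (a - 2) * disc R + disc R.dropLast := by
  obtain ⟨S, m, rfl⟩ := (List.eq_nil_or_concat' R).resolve_left hR
  rw [chainGlue_twoChain ha, disc_dropLast_append_cons_replicate_two,
    disc_append_singleton_add_one, Int.toNat_of_nonneg (by omega), List.dropLast_concat]
  ring

end Glue

theorem twoChain_eq_chainGlue_one {a : ℤ} (ha : 2 ≤ a) : twoChain a = chainGlue [1] (twoChain a) := by
  rw [← List.nil_append [1], chainGlue_twoChain ha, twoChain,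
    show (a - 1).toNat = (a - 2).toNat + 1 by omega, List.replicate_succ]
  rfl

theorem disc_adjoint_and_dropLast : ∀ (A : List ℤ), A ≠ [] → (∀ a ∈ A, 2 ≤ a) →
    adjoint A ≠ [] ∧ disc (adjoint A) = disc A ∧
      disc (adjoint A).dropLast = disc A - disc A.tail
  | [a], _, h2 => by
    have ha : 2 ≤ a := h2 a (List.mem_singleton_self a)
    simp only [adjoint]
    rw [twoChain_eq_chainGlue_one ha]
    refine ⟨chainGlue_ne_nil _ _, ?_, ?_⟩
    · rw [disc_chainGlue_twoChain ha (List.cons_ne_nil 1 [])]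
      simp [disc]
    · rw [disc_dropLast_chainGlue_twoChain ha (List.cons_ne_nil 1 [])]
      simp only [disc, List.dropLast_singleton, List.tail_cons]
      ring
  | a :: b :: l, _, h2 => by
    have ha : 2 ≤ a := h2 a List.mem_cons_self
    obtain ⟨hne, hdisc, hdrop⟩ :=
      disc_adjoint_and_dropLast (b :: l) (List.cons_ne_nil b l)
        (fun x hx => h2 x (List.mem_cons_of_mem a hx))
    simp only [List.tail_cons] at hdrop
    simp only [adjoint, List.tail_cons, disc]
    refine ⟨chainGlue_ne_nil _ _, ?_, ?_⟩
    · rw [disc_chainGlue_twoChain ha hne, hdisc, hdrop]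
      ring
    · rw [disc_dropLast_chainGlue_twoChain ha hne, hdisc, hdrop]
      ring

theorem disc_adjoint (A : List ℤ) (hA : A ≠ []) (h2 : ∀ a ∈ A, 2 ≤ a) :
    disc (adjoint A) = disc A :=
  (disc_adjoint_and_dropLast A hA h2).2.1
end

section
/- For every nonempty list A = [a_1,...,a_r] of integers with all a_i ≥ 2, the chain A ++ [1] ++ A* has discriminant zero: d(A ++ [1] ++ A*) = 0. -/
open Matrix

def stepMatrix (a : ℤ) : Matrix (Fin 2) (Fin 2) ℤ := !![a, -1; 1, 0]

def chainMatrix (L : List ℤ) : Matrix (Fin 2) (Fin 2) ℤ := (L.map stepMatrix).prod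

@[simp]
lemma chainMatrix_nil : chainMatrix [] = 1 := rfl

@[simp]
lemma chainMatrix_cons (a : ℤ) (L : List ℤ) :
    chainMatrix (a :: L) = stepMatrix a * chainMatrix L := rfl

@[simp]
lemma chainMatrix_append (L L' : List ℤ) :
    chainMatrix (L ++ L') = chainMatrix L * chainMatrix L' := by
  simp [chainMatrix]

lemma det_stepMatrix (a : ℤ) : (stepMatrix a).det = 1 := by
  simp [stepMatrix, det_fin_two_of]

lemma det_chainMatrix (L : List ℤ) : (chainMatrix L).det = 1 := by
  induction L with
  | nil => simp
  | cons a L ih => rw [chainMatrix_cons, det_mul, det_stepMatrix, ih, one_mul]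

lemma chainMatrix_cons_one_zero (a : ℤ) (L : List ℤ) :
    chainMatrix (a :: L) 1 0 = chainMatrix L 0 0 := by
  simp [stepMatrix, mul_apply, Fin.sum_univ_two]

lemma chainMatrix_cons_zero_zero (a : ℤ) (L : List ℤ) :
    chainMatrix (a :: L) 0 0 = a * chainMatrix L 0 0 - chainMatrix L 1 0 := by
  simp [stepMatrix, mul_apply, Fin.sum_univ_two, sub_eq_add_neg]

lemma disc_eq_chainMatrix (L : List ℤ) : disc L = chainMatrix L 0 0 := by
  induction L using disc.induct with
  | case1 => rfl
  | case2 a => simp [disc, stepMatrix]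
  | case3 a b l ih₁ ih₂ =>
    rw [disc, chainMatrix_cons_zero_zero, chainMatrix_cons_one_zero, ih₁, ih₂]

lemma stepMatrix_add_sub_one (c t : ℤ) :
    stepMatrix (c + t - 1) = stepMatrix c * !![0, 1; -1, 1] * stepMatrix t := by
  simp [stepMatrix]
  ring

lemma chainMatrix_chainGlue {C T : List ℤ} (hC : C ≠ []) (hT : T ≠ []) :
    chainMatrix (chainGlue C T) = chainMatrix C * !![0, 1; -1, 1] * chainMatrix T := by
  obtain ⟨D, c, rfl⟩ := (List.eq_nil_or_concat C).resolve_left hC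
  obtain ⟨t, T, rfl⟩ := List.exists_cons_of_ne_nil hT
  simp [chainGlue, stepMatrix_add_sub_one, Matrix.mul_assoc]

lemma chainMatrix_replicate_two (n : ℕ) :
    chainMatrix (List.replicate n 2) = !![(n : ℤ) + 1, -n; n, 1 - n] := by
  induction n with
  | zero => simp [one_fin_two]
  | succ n ih =>
    rw [List.replicate_succ, chainMatrix_cons, ih]
    ext i j; fin_cases i <;> fin_cases j <;> simp [stepMatrix] <;> ring

lemma transpose_stepMatrix (a : ℤ) : (stepMatrix a)ᵀ = !![a, 1; -1, 0] := by
  ext i j; fin_cases i <;> fin_cases j <;> rfl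

lemma chainMatrix_twoChain {a : ℤ} (ha : 1 ≤ a) :
    chainMatrix (twoChain a) = !![1, 0; 1, 1] * (stepMatrix a)ᵀ * !![1, -1; 0, 1] := by
  rw [twoChain, chainMatrix_replicate_two, Int.toNat_of_nonneg (by omega), transpose_stepMatrix]
  ext i j; fin_cases i <;> fin_cases j <;> simp <;> ring

lemma twoChain_ne_nil {a : ℤ} (ha : 2 ≤ a) : twoChain a ≠ [] := by
  simp only [twoChain, ne_eq, List.replicate_eq_nil_iff]
  omega

lemma adjoint_ne_nil {A : List ℤ} (hA : A ≠ []) (h2 : ∀ a ∈ A, 2 ≤ a) :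
    adjoint A ≠ [] := by
  match A with
  | [a] => exact twoChain_ne_nil (h2 a (by simp))
  | _ :: _ :: _ => simp [adjoint, chainGlue]

lemma chainMatrix_adjoint {A : List ℤ} (hA : A ≠ []) (h2 : ∀ a ∈ A, 2 ≤ a) :
    chainMatrix (adjoint A) = !![1, 0; 1, 1] * (chainMatrix A)ᵀ * !![1, -1; 0, 1] := by
  induction A with
  | nil => exact absurd rfl hA
  | cons a B ih =>
    have ha : 2 ≤ a := h2 a (by simp)
    cases B with
    | nil =>
      rw [adjoint, chainMatrix_cons, chainMatrix_nil, Matrix.mul_one]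
      exact chainMatrix_twoChain (by omega)
    | cons b l =>
      have h2B : ∀ x ∈ b :: l, 2 ≤ x := fun x hx => h2 x (by simp [hx])
      have hVGU : !![1, -1; 0, 1] * (!![0, 1; -1, 1] * !![1, 0; 1, 1]) =
          (1 : Matrix (Fin 2) (Fin 2) ℤ) := by
        simp [one_fin_two]
      rw [adjoint, chainMatrix_chainGlue (adjoint_ne_nil (by simp) h2B) (twoChain_ne_nil ha),
        ih (by simp) h2B, chainMatrix_twoChain (by omega), chainMatrix_cons a, transpose_mul]
      simp only [Matrix.mul_assoc]
      rw [← Matrix.mul_assoc _ !![1, 0; 1, 1], ← Matrix.mul_assoc !![1, -1; 0, 1], hVGU,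
        Matrix.one_mul]

lemma fin_two_mul_mul_transpose_eq_det_smul {R : Type*} [CommRing R]
    (X : Matrix (Fin 2) (Fin 2) R) :
    X * !![0, -1; 1, 0] * Xᵀ = X.det • !![0, -1; 1, 0] := by
  ext i j; fin_cases i <;> fin_cases j <;> simp [mul_apply, Fin.sum_univ_two, det_fin_two] <;> ring

theorem disc_append_one_adjoint (A : List ℤ) (hA : A ≠ []) (h2 : ∀ a ∈ A, 2 ≤ a) :
    disc (A ++ 1 :: adjoint A) = 0 := by
  have hJ : stepMatrix 1 * !![1, 0; 1, 1] = !![0, -1; 1, 0] := by simp [stepMatrix]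
  have hM : chainMatrix (A ++ 1 :: adjoint A) = !![0, -1; 1, 0] * !![1, -1; 0, 1] :=
    calc chainMatrix (A ++ 1 :: adjoint A)
        = chainMatrix A * (stepMatrix 1 * !![1, 0; 1, 1]) * (chainMatrix A)ᵀ *
            !![1, -1; 0, 1] := by
          simp only [chainMatrix_append, chainMatrix_cons, chainMatrix_adjoint hA h2,
            Matrix.mul_assoc]
      _ = (chainMatrix A).det • !![0, -1; 1, 0] * !![1, -1; 0, 1] := by
          rw [hJ, fin_two_mul_mul_transpose_eq_det_smul]
      _ = !![0, -1; 1, 0] * !![1, -1; 0, 1] := by rw [det_chainMatrix, one_smul]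
  rw [disc_eq_chainMatrix, hM]
  simp
end
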